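/- Let k, l ∈ ℝ² be nonzero vectors and set m := k + l, assumed nonzero. Then sg(k)·|k| + sg(l)·|l| ≠ −sg(m)·|m|. In other words, the set { (k, l) : k ≠ 0, l ≠ 0, m = k + l ≠ 0, sg(k)|k| + sg(l)|l| = −sg(m)|m| } is empty. -/

import Mathlib

/-!
Each term `sg u * ‖u‖` is `±‖u‖`, so a vanishing signed sum of `‖k‖`, `‖l‖`, `‖k + l‖` with
inconsistent signs forces one of these norms to be the sum of the other two. Equality in the
triangle inequality puts the two vectors involved on a common ray, along which `sg` is constant;
this contradicts the signs.
-/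

/-- The generalized sign of a nonzero vector `k ∈ ℝ²`: `sg k = 1` iff `k₁ > 0` or
(`k₁ = 0` and `k₂ > 0`), and `sg k = −1` otherwise. -/
noncomputable def sg (k : EuclideanSpace ℝ (Fin 2)) : ℝ :=
  if 0 < k 0 ∨ (k 0 = 0 ∧ 0 < k 1) then 1 else -1

lemma sg_eq_one_or_eq_neg_one (u : EuclideanSpace ℝ (Fin 2)) : sg u = 1 ∨ sg u = -1 := by
  unfold sg
  split_ifs <;> simp

lemma sg_smul_of_pos {c : ℝ} (hc : 0 < c) (u : EuclideanSpace ℝ (Fin 2)) : sg (c • u) = sg u := by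
  simp only [sg, PiLp.smul_apply, smul_eq_mul, mul_pos_iff_of_pos_left hc, mul_eq_zero, hc.ne',
    false_or]

lemma sg_add_of_norm_add_eq {u v : EuclideanSpace ℝ (Fin 2)} (hu : u ≠ 0) (hv : v ≠ 0)
    (h : ‖u + v‖ = ‖u‖ + ‖v‖) : sg (u + v) = sg u := by
  obtain ⟨r, hr, rfl⟩ := (sameRay_iff_norm_add.mpr h).exists_pos_left hu hv
  rw [show u + r • u = (1 + r) • u by rw [add_smul, one_smul], sg_smul_of_pos (by positivity)]

lemma signed_sum_eq_zero_cases {s₁ s₂ s₃ x y z : ℝ} (hs₁ : s₁ = 1 ∨ s₁ = -1)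
    (hs₂ : s₂ = 1 ∨ s₂ = -1) (hs₃ : s₃ = 1 ∨ s₃ = -1) (hx : 0 ≤ x) (hy : 0 ≤ y) (hz : 0 < z)
    (h : s₁ * x + s₂ * y + s₃ * z = 0) :
    (z = x + y ∧ s₃ ≠ s₁) ∨ (x = z + y ∧ s₁ ≠ s₃) ∨ (y = z + x ∧ s₂ ≠ s₃) := by
  rcases hs₁ with rfl | rfl <;> rcases hs₂ with rfl | rfl <;> rcases hs₃ with rfl | rfl <;>
    grind

/-- For nonzero `k, l ∈ ℝ²` with `m = k + l ≠ 0`, one never has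
`sg(k)|k| + sg(l)|l| = −sg(m)|m|`; i.e. the corresponding resonance set is empty. -/
theorem resonance_set_sum_neg_empty
    (k l : EuclideanSpace ℝ (Fin 2)) (hk : k ≠ 0) (hl : l ≠ 0) (hm : k + l ≠ 0) :
    sg k * ‖k‖ + sg l * ‖l‖ ≠ -(sg (k + l) * ‖k + l‖) := by
  intro h
  rcases signed_sum_eq_zero_cases (sg_eq_one_or_eq_neg_one k) (sg_eq_one_or_eq_neg_one l)
      (sg_eq_one_or_eq_neg_one (k + l)) (norm_nonneg k) (norm_nonneg l) (norm_pos_iff.mpr hm)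
      (by linarith) with ⟨hnorm, hsg⟩ | ⟨hnorm, hsg⟩ | ⟨hnorm, hsg⟩
  · exact hsg (sg_add_of_norm_add_eq hk hl hnorm)
  · have := sg_add_of_norm_add_eq hm (neg_ne_zero.mpr hl) (by simpa using hnorm)
    exact hsg (by simpa using this)
  · have := sg_add_of_norm_add_eq hm (neg_ne_zero.mpr hk) (by simpa using hnorm)
    exact hsg (by simpa using this)
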